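/- arXiv:math/0511656 — 2 statements merged into one kernel-verified Lean document; each statement's English description precedes it below -/
import Mathlib

section
/- Let g ≥ 2, and let j, r, r₂, d, d₂ be integers with j = hcf(r,d), r ∤ d, r/j < r₂ < 2r/j, and (1−g)·r₂·r + r₂·d − r·d₂ = j. Set r₁ := j·r₂ − r and d₁ := j·d₂ − d. Then r₁·d₂ − r₂·d₁ = r₂·d − r·d₂ > (g−1)·r₂·r, and in particular d₂/r₂ − d₁/r₁ > g−1 (as rational numbers, assuming r₁ > 0). -/
/-- Let `g ≥ 2` and let `j, r, r₂, d, d₂` be integers with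
`j = hcf(r,d)`, `r ∤ d`, `r/j < r₂ < 2r/j` (with `r₂·d ≡ j (mod r)`), and
`(1−g)·r₂·r + r₂·d − r·d₂ = j`.  Set `r₁ := j·r₂ − r`, `d₁ := j·d₂ − d`.
Then `r₁·d₂ − r₂·d₁ = r₂·d − r·d₂ > (g−1)·r₂·r`, and in particular (assuming
`r₁ > 0`) `d₂/r₂ − d₁/r₁ > g−1` as rational numbers. -/
theorem stmt1 (g j r d r₂ d₂ r₁ d₁ : ℤ) (hg : 2 ≤ g) (hr : 1 ≤ r)
    (hgcd : j = (Int.gcd r d : ℤ)) (hrd : ¬ r ∣ d)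
    (hlow : r < j * r₂) (hhigh : j * r₂ < 2 * r)
    (hmod : r₂ * d ≡ j [ZMOD r])
    (hd₂ : (1 - g) * r₂ * r + r₂ * d - r * d₂ = j)
    (hr₁ : r₁ = j * r₂ - r) (hd₁ : d₁ = j * d₂ - d)
    (hr₁pos : 0 < r₁) :
    r₁ * d₂ - r₂ * d₁ = r₂ * d - r * d₂ ∧
    r₂ * d - r * d₂ > (g - 1) * r₂ * r ∧
    (d₂ : ℚ) / (r₂ : ℚ) - (d₁ : ℚ) / (r₁ : ℚ) > (g : ℚ) - 1 := by
  have hj : 0 < j := by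
    rw [hgcd]
    have : r.gcd d ≠ 0 := by
      simp [Int.gcd_eq_zero_iff]
      omega
    positivity
  have hr₂ : 0 < r₂ := by nlinarith
  have h1 : r₁ * d₂ - r₂ * d₁ = r₂ * d - r * d₂ := by
    subst hr₁ hd₁; ring
  have h2 : r₂ * d - r * d₂ > (g - 1) * r₂ * r := by nlinarith
  refine ⟨h1, h2, ?_⟩
  have hr₂q : (0:ℚ) < (r₂:ℚ) := by exact_mod_cast hr₂
  have hr₁q : (0:ℚ) < (r₁:ℚ) := by exact_mod_cast hr₁pos
  have hlt : r₁ < r := by omega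
  have hkey : r₂ * d - r * d₂ > (g - 1) * (r₂ * r₁) := by
    nlinarith [mul_pos (mul_pos (by linarith : (0:ℤ) < g - 1) hr₂) (by linarith : (0:ℤ) < r - r₁)]
  rw [div_sub_div _ _ (ne_of_gt hr₂q) (ne_of_gt hr₁q), gt_iff_lt,
    lt_div_iff₀ (by positivity)]
  have := hkey
  have h1q : (r₁:ℚ) * d₂ - r₂ * d₁ = r₂ * d - r * d₂ := by exact_mod_cast h1
  have hkeyq : ((r₂:ℚ) * d - r * d₂) > ((g:ℚ) - 1) * (r₂ * r₁) := by
    exact_mod_cast hkey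
  nlinarith [hkeyq, h1q]
end

section
/- Let g, r₁, r₂, d₁, d₂, r, d, e be integers with 0 < r < r₂ < r₁, e ≥ 0, d ≤ d₂, satisfying (r₁−r)(d₂−d) − (r₂−r)(d₁−d) + e = (g−1)(r₁−r)(r₂−r). Define μ₁ = (d₁−d)/(r₁−r) and μ₂ = (d₂−d)/(r₂−r). If μ₁ < d₁/r₁ and d₂/r₂ < μ₂, then d₂/r₂ − d₁/r₁ ≤ g−1. -/
/-- Let `g, r₁, r₂, d₁, d₂, r, d, e` be integers with
`0 < r < r₂ < r₁`, `e ≥ 0`, `d ≤ d₂`, satisfying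
`(r₁−r)(d₂−d) − (r₂−r)(d₁−d) + e = (g−1)(r₁−r)(r₂−r)`.
Define the slopes `μ₁ = (d₁−d)/(r₁−r)` and `μ₂ = (d₂−d)/(r₂−r)` (rationals).
If `μ₁ < d₁/r₁` and `d₂/r₂ < μ₂`, then `d₂/r₂ − d₁/r₁ ≤ g−1`. -/
theorem stmt12 (g r₁ r₂ d₁ d₂ r d e : ℤ)
    (hr : 0 < r) (hrr₂ : r < r₂) (hr₂r₁ : r₂ < r₁)
    (he : 0 ≤ e) (hd : d ≤ d₂)
    (heq : (r₁ - r) * (d₂ - d) - (r₂ - r) * (d₁ - d) + e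
      = (g - 1) * (r₁ - r) * (r₂ - r))
    (hμ₁ : ((d₁ - d : ℤ) : ℚ) / ((r₁ - r : ℤ) : ℚ) < (d₁ : ℚ) / (r₁ : ℚ))
    (hμ₂ : (d₂ : ℚ) / (r₂ : ℚ) < ((d₂ - d : ℤ) : ℚ) / ((r₂ - r : ℤ) : ℚ)) :
    (d₂ : ℚ) / (r₂ : ℚ) - (d₁ : ℚ) / (r₁ : ℚ) ≤ (g : ℚ) - 1 := by
  have ha : (0 : ℚ) < ((r₁ - r : ℤ) : ℚ) := by
    exact_mod_cast sub_pos.mpr (hrr₂.trans hr₂r₁)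
  have hb : (0 : ℚ) < ((r₂ - r : ℤ) : ℚ) := by
    exact_mod_cast sub_pos.mpr hrr₂
  have he' : (0 : ℚ) ≤ (e : ℚ) := by exact_mod_cast he
  have heq' : ((r₁ : ℚ) - r) * ((d₂ : ℚ) - d) - ((r₂ : ℚ) - r) * ((d₁ : ℚ) - d) + e
      = ((g : ℚ) - 1) * ((r₁ : ℚ) - r) * ((r₂ : ℚ) - r) := by
    exact_mod_cast heq
  have key : ((d₂ - d : ℤ) : ℚ) / ((r₂ - r : ℤ) : ℚ)
      - ((d₁ - d : ℤ) : ℚ) / ((r₁ - r : ℤ) : ℚ) ≤ (g : ℚ) - 1 := by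
    rw [div_sub_div _ _ hb.ne' ha.ne', div_le_iff₀ (by positivity)]
    push_cast
    nlinarith [mul_pos ha hb]
  linarith
end
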